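/- arXiv:2210.07192 — 2 statements merged into one kernel-verified Lean document; each statement's English description precedes it below -/
import Mathlib

section
/- Let R > 0 and let C_R = K {h_t : t ∈ [0,R)ⁿ} K ⊆ Sp(2n,ℝ), where h_t = diag(e^{t₁},…,e^{t_n}, e^{-t₁},…,e^{-t_n}) and K = Sp(2n,ℝ) ∩ O(2n) (equivalently Sp(2n,ℝ) ∩ U(2n)). Then every g ∈ C_R C_R^{-1} satisfies ‖g‖ < √(2n · cosh(4R)), where ‖g‖ is the Frobenius (Hilbert–Schmidt) norm. -/
open scoped BigOperators
open Matrix Complex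

noncomputable section

abbrev Mat (n : ℕ) := Matrix (Fin n) (Fin n) ℂ
abbrev MatR (n : ℕ) := Matrix (Fin n) (Fin n) ℝ
abbrev GMat (n : ℕ) := Matrix (Fin n ⊕ Fin n) (Fin n ⊕ Fin n) ℝ
abbrev GMatC (n : ℕ) := Matrix (Fin n ⊕ Fin n) (Fin n ⊕ Fin n) ℂ

def Jmat (n : ℕ) : GMat n := Matrix.fromBlocks 0 1 (-1) 0

def Sp (n : ℕ) : Set (GMat n) := {g | gᵀ * Jmat n * g = Jmat n}

def imPart {n : ℕ} (z : Mat n) : MatR n := Matrix.of fun i j => (z i j).im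
def rePart {n : ℕ} (z : Mat n) : MatR n := Matrix.of fun i j => (z i j).re

def SiegelH (n : ℕ) : Set (Mat n) := {z | zᵀ = z ∧ (imPart z).PosDef}

def mapC {n : ℕ} (g : GMat n) : GMatC n := g.map Complex.ofReal

def denC {n : ℕ} (g : GMatC n) (z : Mat n) : Mat n := g.toBlocks₂₁ * z + g.toBlocks₂₂
def numC {n : ℕ} (g : GMatC n) (z : Mat n) : Mat n := g.toBlocks₁₁ * z + g.toBlocks₁₂
def actC {n : ℕ} (g : GMatC n) (z : Mat n) : Mat n := numC g z * (denC g z)⁻¹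
def jC {n : ℕ} (g : GMatC n) (z : Mat n) : ℂ := (denC g z).det

def act {n : ℕ} (g : GMat n) (z : Mat n) : Mat n := actC (mapC g) z
def jfac {n : ℕ} (g : GMat n) (z : Mat n) : ℂ := jC (mapC g) z

def slash {n : ℕ} (m : ℤ) (f : Mat n → ℂ) (g : GMat n) (z : Mat n) : ℂ :=
  (jfac g z) ^ (-m) * f (act g z)

def lift {n : ℕ} (m : ℤ) (f : Mat n → ℂ) (g : GMat n) : ℂ :=
  slash m f g (Complex.I • 1)

def Kset (n : ℕ) : Set (GMat n) := {g | g ∈ Sp n ∧ gᵀ * g = 1}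

def hmat {n : ℕ} (t : Fin n → ℝ) : GMat n :=
  Matrix.fromBlocks (Matrix.diagonal fun i => Real.exp (t i)) 0 0
    (Matrix.diagonal fun i => Real.exp (-t i))

def CRset (n : ℕ) (R : ℝ) : Set (GMat n) :=
  {g | ∃ k ∈ Kset n, ∃ k' ∈ Kset n, ∃ t : Fin n → ℝ,
      (∀ i, t i ∈ Set.Ico (0 : ℝ) R) ∧ g = k * hmat t * k'}

def frob {n : ℕ} (g : GMat n) : ℝ := Real.sqrt (∑ i, ∑ j, (g i j) ^ 2)

lemma sq_eq_trace {n : ℕ} (g : GMat n) : ∑ i, ∑ j, (g i j) ^ 2 = (gᵀ * g).trace := by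
  rw [Matrix.trace, Finset.sum_comm]
  simp [Matrix.diag, Matrix.mul_apply, sq]

lemma sq_mul_left {n : ℕ} (k g : GMat n) (hk : kᵀ * k = 1) :
    ∑ i, ∑ j, ((k * g) i j) ^ 2 = ∑ i, ∑ j, (g i j) ^ 2 := by
  rw [sq_eq_trace, sq_eq_trace, Matrix.transpose_mul, Matrix.mul_assoc,
    ← Matrix.mul_assoc kᵀ, hk, Matrix.one_mul]

lemma sq_mul_right {n : ℕ} (k g : GMat n) (hk : k * kᵀ = 1) :
    ∑ i, ∑ j, ((g * k) i j) ^ 2 = ∑ i, ∑ j, (g i j) ^ 2 := by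
  rw [sq_eq_trace, sq_eq_trace, Matrix.transpose_mul, Matrix.trace_mul_comm,
    Matrix.mul_assoc, ← Matrix.mul_assoc k kᵀ, hk, Matrix.one_mul, Matrix.trace_mul_comm]

lemma Kset_orth {n : ℕ} {k : GMat n} (hk : k ∈ Kset n) : k * kᵀ = 1 :=
  mul_eq_one_comm.mp hk.2

lemma Kset_commJ {n : ℕ} {k : GMat n} (hk : k ∈ Kset n) : Jmat n * k = k * Jmat n := by
  calc Jmat n * k = k * kᵀ * Jmat n * k := by rw [Kset_orth hk, Matrix.one_mul]
    _ = k * (kᵀ * Jmat n * k) := by simp [Matrix.mul_assoc]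
    _ = k * Jmat n := by rw [hk.1]

lemma Kset_transpose {n : ℕ} {k : GMat n} (hk : k ∈ Kset n) : kᵀ ∈ Kset n := by
  refine ⟨?_, ?_⟩
  · show kᵀᵀ * Jmat n * kᵀ = Jmat n
    rw [Matrix.transpose_transpose, ← Kset_commJ hk, Matrix.mul_assoc, Kset_orth hk,
      Matrix.mul_one]
  · rw [Matrix.transpose_transpose]; exact Kset_orth hk

lemma Kset_mul {n : ℕ} {a b : GMat n} (ha : a ∈ Kset n) (hb : b ∈ Kset n) :
    a * b ∈ Kset n := by
  constructor
  · show (a * b)ᵀ * Jmat n * (a * b) = Jmat n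
    rw [Matrix.transpose_mul]
    calc bᵀ * aᵀ * Jmat n * (a * b) = bᵀ * (aᵀ * Jmat n * a) * b := by
          simp [Matrix.mul_assoc]
      _ = bᵀ * Jmat n * b := by rw [ha.1]
      _ = Jmat n := hb.1
  · show (a * b)ᵀ * (a * b) = 1
    rw [Matrix.transpose_mul]
    calc bᵀ * aᵀ * (a * b) = bᵀ * (aᵀ * a) * b := by simp [Matrix.mul_assoc]
      _ = 1 := by rw [ha.2, Matrix.mul_one, hb.2]

lemma hmat_eq {n : ℕ} (t : Fin n → ℝ) :
    hmat t = Matrix.diagonal (Sum.elim (fun i => Real.exp (t i)) (fun i => Real.exp (-t i))) := by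
  rw [hmat, Matrix.fromBlocks_diagonal]

lemma hmat_mul_neg {n : ℕ} (t : Fin n → ℝ) : hmat (fun i => -t i) * hmat t = 1 := by
  rw [hmat_eq, hmat_eq, Matrix.diagonal_mul_diagonal]
  ext i j
  rcases eq_or_ne i j with rfl | hij
  · rw [Matrix.diagonal_apply_eq, Matrix.one_apply_eq]
    cases i <;> simp [← Real.exp_add]
  · rw [Matrix.diagonal_apply_ne _ hij, Matrix.one_apply_ne hij]

lemma hmat_inv {n : ℕ} (t : Fin n → ℝ) : (hmat t)⁻¹ = hmat (fun i => -t i) :=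
  Matrix.inv_eq_left_inv (hmat_mul_neg t)

lemma Kset_entry {n : ℕ} {u : GMat n} (hu : u ∈ Kset n) (i j : Fin n ⊕ Fin n) :
    (u (i.swap) (j.swap)) ^ 2 = (u i j) ^ 2 := by
  have h := Kset_commJ hu
  have h1 : ∀ r s : Fin n, u (Sum.inr r) (Sum.inl s) = - u (Sum.inl r) (Sum.inr s) := by
    intro r s
    have := congrFun (congrFun h (Sum.inl r)) (Sum.inl s)
    simpa [Jmat, Matrix.mul_apply, Matrix.fromBlocks, Fintype.sum_sum_type,
      Matrix.one_apply] using this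
  have h2 : ∀ r s : Fin n, u (Sum.inr r) (Sum.inr s) = u (Sum.inl r) (Sum.inl s) := by
    intro r s
    have := congrFun (congrFun h (Sum.inl r)) (Sum.inr s)
    simpa [Jmat, Matrix.mul_apply, Matrix.fromBlocks, Fintype.sum_sum_type,
      Matrix.one_apply] using this
  cases i with
  | inl r => cases j with
    | inl s => simp [Sum.swap, h2]
    | inr s => simp [Sum.swap, h1]
  | inr r => cases j with
    | inl s => rw [show (Sum.inr r : Fin n ⊕ Fin n).swap = Sum.inl r from rfl,
        show (Sum.inl s : Fin n ⊕ Fin n).swap = Sum.inr s from rfl, h1 r s]; ring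
    | inr s => simp [Sum.swap, h2]

lemma Kset_row {n : ℕ} {u : GMat n} (hu : u ∈ Kset n) (i : Fin n ⊕ Fin n) :
    ∑ j, (u i j) ^ 2 = 1 := by
  have := congrFun (congrFun (Kset_orth hu) i) i
  simpa [Matrix.mul_apply, Matrix.one_apply, sq] using this

theorem stmt6 (n : ℕ) (hn : 0 < n) (R : ℝ) (hR : 0 < R) (g : GMat n)
    (hg : ∃ a ∈ CRset n R, ∃ b ∈ CRset n R, g = a * b⁻¹) :
    frob g < Real.sqrt (2 * n * Real.cosh (4 * R)) := by
  obtain ⟨a, ⟨k₁, hk₁, k₂, hk₂, t, ht, rfl⟩, b, ⟨k₃, hk₃, k₄, hk₄, t', ht', rfl⟩, rfl⟩ := hg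
  set u : GMat n := k₂ * k₄ᵀ with hu_def
  have hu : u ∈ Kset n := Kset_mul hk₂ (Kset_transpose hk₄)
  have hk3inv : k₃⁻¹ = k₃ᵀ := Matrix.inv_eq_left_inv hk₃.2
  have hk4inv : k₄⁻¹ = k₄ᵀ := Matrix.inv_eq_left_inv hk₄.2
  have hb : (k₃ * hmat t' * k₄)⁻¹ = k₄ᵀ * hmat (fun i => -t' i) * k₃ᵀ := by
    rw [Matrix.mul_inv_rev, Matrix.mul_inv_rev, hk3inv, hk4inv, hmat_inv, Matrix.mul_assoc]
  rw [hb]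
  set M : GMat n := hmat t * u * hmat (fun i => -t' i) with hM
  have hgform : k₁ * hmat t * k₂ * (k₄ᵀ * hmat (fun i => -t' i) * k₃ᵀ)
      = k₁ * (M * k₃ᵀ) := by
    rw [hM, hu_def]; noncomm_ring
  rw [hgform]
  -- reduce frobenius to M
  have hsq : ∑ i, ∑ j, ((k₁ * (M * k₃ᵀ)) i j) ^ 2 = ∑ i, ∑ j, (M i j) ^ 2 := by
    rw [sq_mul_left _ _ hk₁.2, sq_mul_right]
    rw [Matrix.transpose_transpose]
    exact hk₃.2
  set s : Fin n ⊕ Fin n → ℝ := Sum.elim t (fun r => -t r) with hs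
  set s' : Fin n ⊕ Fin n → ℝ := Sum.elim t' (fun r => -t' r) with hs'
  have hMentry : ∀ i j, M i j = u i j * Real.exp (s i - s' j) := by
    intro i j
    rw [hM, hmat_eq, hmat_eq, Matrix.mul_diagonal, Matrix.diagonal_mul]
    rw [Real.exp_sub]
    cases i <;> cases j <;>
      simp [hs, hs', Real.exp_neg, div_eq_mul_inv] <;> ring
  have habs_s : ∀ i, |s i| < R := by
    intro i
    cases i with
    | inl r =>
        simp only [hs, Sum.elim_inl]
        rw [_root_.abs_of_nonneg (ht r).1]; exact (ht r).2
    | inr r =>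
        simp only [hs, Sum.elim_inr, abs_neg]
        rw [_root_.abs_of_nonneg (ht r).1]; exact (ht r).2
  have habs_s' : ∀ i, |s' i| < R := by
    intro i
    cases i with
    | inl r =>
        simp only [hs', Sum.elim_inl]
        rw [_root_.abs_of_nonneg (ht' r).1]; exact (ht' r).2
    | inr r =>
        simp only [hs', Sum.elim_inr, abs_neg]
        rw [_root_.abs_of_nonneg (ht' r).1]; exact (ht' r).2
  have hcosh : ∀ i j, Real.cosh (2 * (s i - s' j)) < Real.cosh (4 * R) := by
    intro i j
    rw [Real.cosh_lt_cosh]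
    have h2 : |s i - s' j| ≤ |s i| + |s' j| := abs_sub _ _
    have h1 : |2 * (s i - s' j)| = 2 * |s i - s' j| := by rw [abs_mul]; norm_num
    have h4 : |4 * R| = 4 * R := abs_of_pos (by linarith)
    rw [h1, h4]
    nlinarith [habs_s i, habs_s' j]
  -- rewrite the sum with cosh
  have key : ∑ i, ∑ j, (u i j) ^ 2 * Real.exp (2 * (s i - s' j))
      = ∑ i, ∑ j, (u i j) ^ 2 * Real.exp (-(2 * (s i - s' j))) := by
    have hswap_s : ∀ i : Fin n ⊕ Fin n, s (Sum.swap i) = - s i := by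
      intro i; cases i <;> simp [hs]
    have hswap_s' : ∀ i : Fin n ⊕ Fin n, s' (Sum.swap i) = - s' i := by
      intro i; cases i <;> simp [hs']
    refine Fintype.sum_equiv (Equiv.sumComm (Fin n) (Fin n)) _ _ ?_
    intro i
    refine Fintype.sum_equiv (Equiv.sumComm (Fin n) (Fin n)) _ _ ?_
    intro j
    have hi : (Equiv.sumComm (Fin n) (Fin n)) i = Sum.swap i := rfl
    have hj : (Equiv.sumComm (Fin n) (Fin n)) j = Sum.swap j := rfl
    rw [hi, hj, Kset_entry hu, hswap_s, hswap_s']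
    ring_nf
  have hsum : ∑ i, ∑ j, (M i j) ^ 2
      = ∑ i, ∑ j, (u i j) ^ 2 * Real.cosh (2 * (s i - s' j)) := by
    have e1 : ∑ i, ∑ j, (M i j) ^ 2
        = ∑ i, ∑ j, (u i j) ^ 2 * Real.exp (2 * (s i - s' j)) := by
      refine Finset.sum_congr rfl fun i _ => Finset.sum_congr rfl fun j _ => ?_
      rw [hMentry, mul_pow, sq (Real.exp _), ← Real.exp_add]
      ring_nf
    have e2 : ∀ i j, (u i j) ^ 2 * Real.cosh (2 * (s i - s' j))
        = ((u i j) ^ 2 * Real.exp (2 * (s i - s' j))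
          + (u i j) ^ 2 * Real.exp (-(2 * (s i - s' j)))) / 2 := by
      intro i j; rw [Real.cosh_eq]; ring
    rw [e1]
    have : ∑ i, ∑ j, (u i j) ^ 2 * Real.cosh (2 * (s i - s' j))
        = (∑ i, ∑ j, (u i j) ^ 2 * Real.exp (2 * (s i - s' j))
          + ∑ i, ∑ j, (u i j) ^ 2 * Real.exp (-(2 * (s i - s' j)))) / 2 := by
      rw [← Finset.sum_add_distrib]
      rw [Finset.sum_div]
      refine Finset.sum_congr rfl fun i _ => ?_
      rw [← Finset.sum_add_distrib, Finset.sum_div]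
      exact Finset.sum_congr rfl fun j _ => e2 i j
    rw [this, ← key]
    ring
  -- strict bound
  have hbound : ∑ i, ∑ j, (u i j) ^ 2 * Real.cosh (2 * (s i - s' j))
      < 2 * n * Real.cosh (4 * R) := by
    have hlt : ∑ i, ∑ j, (u i j) ^ 2 * Real.cosh (2 * (s i - s' j))
        < ∑ i, ∑ j, (u i j) ^ 2 * Real.cosh (4 * R) := by
      rw [← Finset.sum_product', ← Finset.sum_product']
      refine Finset.sum_lt_sum (fun p _ => ?_) ?_
      · exact mul_le_mul_of_nonneg_left (le_of_lt (hcosh p.1 p.2)) (sq_nonneg _)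
      · -- witness
        have i0 : Fin n := ⟨0, hn⟩
        have hrow := Kset_row hu (Sum.inl i0)
        have : ∃ j, u (Sum.inl i0) j ≠ 0 := by
          by_contra hcon
          push_neg at hcon
          rw [Finset.sum_eq_zero (fun j _ => by rw [hcon j]; ring)] at hrow
          norm_num at hrow
        obtain ⟨j0, hj0⟩ := this
        refine ⟨(Sum.inl i0, j0), Finset.mem_product.mpr ⟨Finset.mem_univ _, Finset.mem_univ _⟩, ?_⟩
        have hpos : 0 < (u (Sum.inl i0) j0) ^ 2 := by positivity
        exact mul_lt_mul_of_pos_left (hcosh _ _) hpos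
    have heq : ∑ i, ∑ j, (u i j) ^ 2 * Real.cosh (4 * R) = 2 * n * Real.cosh (4 * R) := by
      have : ∑ i, ∑ j, (u i j) ^ 2 * Real.cosh (4 * R)
          = (∑ i : Fin n ⊕ Fin n, ∑ j, (u i j) ^ 2) * Real.cosh (4 * R) := by
        rw [Finset.sum_mul]
        exact Finset.sum_congr rfl fun i _ => (Finset.sum_mul _ _ _).symm
      rw [this]
      have : ∑ i : Fin n ⊕ Fin n, ∑ j, (u i j) ^ 2 = 2 * n := by
        rw [Finset.sum_congr rfl fun i _ => Kset_row hu i]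
        simp [Finset.card_univ]
        ring
      rw [this]
    calc _ < ∑ i, ∑ j, (u i j) ^ 2 * Real.cosh (4 * R) := hlt
      _ = 2 * n * Real.cosh (4 * R) := heq
  -- conclude
  rw [frob, hsq, hsum]
  exact Real.sqrt_lt_sqrt (Finset.sum_nonneg fun i _ => Finset.sum_nonneg fun j _ =>
    mul_nonneg (sq_nonneg _) (Real.cosh_pos _).le) hbound
end
end

section
/- The intersection Γ_n(N) ∩ K of the principal congruence subgroup with the maximal compact subgroup K = Sp(2n,ℝ) ∩ U(2n) equals: {k_u : u ∈ Diag_n({±1, ±i}) · S_n} if N = 1; {k_u : u ∈ Diag_n({±1})} if N = 2; and {I_{2n}} if N ≥ 3. Here S_n denotes the group of n×n permutation matrices. -/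
/-!
An element `g` of `K` satisfies `gᵀ J g = J` and `gᵀ g = 1`, so it commutes with `J = k_{i·1}`
and is therefore `k_u` for a unitary `u`. Integrality of `k_u` says that `u` has entries in
`ℤ[i]`; the column norms of `u` are sums of non-negative integers equal to `1`, so `u` is a
monomial matrix with entries in `{±1, ±i}`. For `N ≥ 2`, a zero or purely imaginary diagonal
entry is not `≡ 1 mod N`, which forces the permutation to be trivial and the entries to be `±1`;
and `-1 ≢ 1 mod N` once `N ≥ 3`.
-/

open scoped BigOperators
open Matrix Complex

noncomputable section

def GammaN (n N : ℕ) : Set (GMat n) :=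
  {g | g ∈ Sp n ∧ ∀ i j, ∃ k : ℤ, g i j = (1 : GMat n) i j + (N : ℝ) * k}

def kmat {n : ℕ} (u : Mat n) : GMat n :=
  Matrix.fromBlocks (rePart u) (imPart u) (-(imPart u)) (rePart u)

section kmat

variable {n : ℕ}

@[simp] lemma rePart_apply (u : Mat n) (i j : Fin n) : rePart u i j = (u i j).re := rfl
@[simp] lemma imPart_apply (u : Mat n) (i j : Fin n) : imPart u i j = (u i j).im := rfl

lemma rePart_mul (u v : Mat n) : rePart (u * v) = rePart u * rePart v - imPart u * imPart v := by
  ext i j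
  simp [Matrix.mul_apply, Complex.re_sum, Finset.sum_sub_distrib]

lemma imPart_mul (u v : Mat n) : imPart (u * v) = rePart u * imPart v + imPart u * rePart v := by
  ext i j
  simp [Matrix.mul_apply, Complex.im_sum, Finset.sum_add_distrib]

lemma rePart_conjTranspose (u : Mat n) : rePart uᴴ = (rePart u)ᵀ := by
  ext i j
  simp

lemma imPart_conjTranspose (u : Mat n) : imPart uᴴ = -(imPart u)ᵀ := by
  ext i j
  simp

lemma kmat_mul (u v : Mat n) : kmat (u * v) = kmat u * kmat v := by
  simp only [kmat, fromBlocks_multiply, rePart_mul, imPart_mul, fromBlocks_inj]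
  refine ⟨?_, ?_, ?_, ?_⟩ <;> noncomm_ring

lemma kmat_conjTranspose (u : Mat n) : kmat uᴴ = (kmat u)ᵀ := by
  simp [kmat, fromBlocks_transpose, rePart_conjTranspose, imPart_conjTranspose]

@[simp] lemma kmat_one : kmat (1 : Mat n) = 1 := by
  rw [kmat, ← fromBlocks_one]
  congr <;> ext i j <;> by_cases h : i = j <;> simp [one_apply, h]

lemma Jmat_eq_kmat : Jmat n = kmat (I • 1) := by
  rw [Jmat, kmat]
  congr <;> ext i j <;> by_cases h : i = j <;> simp [one_apply, h]

lemma kmat_injective : Function.Injective (kmat : Mat n → GMat n) := by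
  intro u v h
  obtain ⟨hre, him, -, -⟩ := fromBlocks_inj.mp h
  ext i j
  exact Complex.ext (congrFun (congrFun hre i) j) (congrFun (congrFun him i) j)

lemma kmat_mem_Kset_iff {u : Mat n} : kmat u ∈ Kset n ↔ u ∈ unitaryGroup (Fin n) ℂ := by
  have horth : (kmat u)ᵀ * kmat u = kmat (star u * u) := by
    rw [kmat_mul, star_eq_conjTranspose, kmat_conjTranspose]
  have hsp : (kmat u)ᵀ * Jmat n * kmat u = kmat (I • (star u * u)) := by
    rw [Jmat_eq_kmat, ← kmat_conjTranspose, ← kmat_mul, ← kmat_mul, mul_smul_one,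
      smul_mul_assoc, star_eq_conjTranspose]
  rw [mem_unitaryGroup_iff', Kset, Set.mem_ofPred_eq, Sp, Set.mem_ofPred_eq, horth, hsp,
    ← kmat_one, kmat_injective.eq_iff, Jmat_eq_kmat, kmat_injective.eq_iff]
  exact and_iff_right_of_imp fun h => by rw [h]

lemma exists_kmat_of_mem_Kset {g : GMat n} (hg : g ∈ Kset n) : ∃ u, g = kmat u := by
  obtain ⟨hsp, horth⟩ := hg
  have hcomm : Jmat n * g = g * Jmat n := by
    calc Jmat n * g = g * (gᵀ * Jmat n * g) := by
          rw [← Matrix.mul_assoc, ← Matrix.mul_assoc, mul_eq_one_comm.mp horth, Matrix.one_mul]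
      _ = g * Jmat n := by rw [hsp]
  rw [← fromBlocks_toBlocks g, Jmat, fromBlocks_multiply, fromBlocks_multiply] at hcomm
  simp only [Matrix.zero_mul, Matrix.one_mul, Matrix.neg_mul, Matrix.mul_zero, Matrix.mul_one,
    Matrix.mul_neg, zero_add, add_zero, fromBlocks_inj] at hcomm
  obtain ⟨h₂₁, h₂₂, -, -⟩ := hcomm
  refine ⟨of fun i j => ⟨g.toBlocks₁₁ i j, g.toBlocks₁₂ i j⟩, ?_⟩
  conv_lhs => rw [← fromBlocks_toBlocks g, h₂₁, h₂₂]
  rfl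

end kmat

def IsGaussInt (z : ℂ) : Prop := ∃ a b : ℤ, z.re = a ∧ z.im = b

/-- `z ≡ w` modulo the ideal `N ℤ[i]` of the Gaussian integers. -/
def GaussModEq (N : ℕ) (z w : ℂ) : Prop := ∃ a b : ℤ, z.re = w.re + N * a ∧ z.im = w.im + N * b

lemma GaussModEq.refl (N : ℕ) (z : ℂ) : GaussModEq N z z := ⟨0, 0, by simp, by simp⟩

lemma GaussModEq.isGaussInt {N : ℕ} {z w : ℂ} (h : GaussModEq N z w) (hw : IsGaussInt w) :
    IsGaussInt z := by
  obtain ⟨a, b, hre, him⟩ := h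
  obtain ⟨c, d, hc, hd⟩ := hw
  exact ⟨c + N * a, d + N * b, by rw [hre, hc]; push_cast; ring, by rw [him, hd]; push_cast; ring⟩

lemma gaussModEq_one {z w : ℂ} (hz : IsGaussInt z) (hw : IsGaussInt w) : GaussModEq 1 z w := by
  obtain ⟨a, b, ha, hb⟩ := hz
  obtain ⟨c, d, hc, hd⟩ := hw
  exact ⟨a - c, b - d, by rw [ha, hc]; push_cast; ring, by rw [hb, hd]; push_cast; ring⟩

lemma IsGaussInt.one_le_normSq {z : ℂ} (hz : IsGaussInt z) (h0 : z ≠ 0) : 1 ≤ normSq z := by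
  obtain ⟨a, b, ha, hb⟩ := hz
  have hab : (1 : ℤ) ≤ a ^ 2 + b ^ 2 := by
    by_cases ha0 : a = 0
    · have hb0 : b ≠ 0 := fun hb0 => h0 (Complex.ext (by simp [ha, ha0]) (by simp [hb, hb0]))
      nlinarith [Int.one_le_abs hb0, sq_abs b, sq_nonneg a]
    · nlinarith [Int.one_le_abs ha0, sq_abs a, sq_nonneg b]
  rw [normSq_apply, ha, hb]
  exact_mod_cast (by linarith : (1 : ℤ) ≤ a * a + b * b)

lemma IsGaussInt.mem_of_normSq_eq_one {z : ℂ} (hz : IsGaussInt z) (h1 : normSq z = 1) :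
    z ∈ ({1, -1, I, -I} : Set ℂ) := by
  obtain ⟨a, b, ha, hb⟩ := hz
  have hab : a ^ 2 + b ^ 2 = 1 := by
    rw [normSq_apply, ha, hb] at h1
    exact_mod_cast (by rw [← h1]; push_cast; ring : ((a ^ 2 + b ^ 2 : ℤ) : ℝ) = 1)
  have ha1 : -1 ≤ a ∧ a ≤ 1 := by constructor <;> nlinarith [sq_nonneg b]
  have hb1 : -1 ≤ b ∧ b ≤ 1 := by constructor <;> nlinarith [sq_nonneg a]
  obtain ⟨ha₀, ha₁⟩ := ha1
  obtain ⟨hb₀, hb₁⟩ := hb1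
  interval_cases a <;> interval_cases b <;> simp_all [Complex.ext_iff]

lemma star_mul_self_of_mem {z : ℂ} (hz : z ∈ ({1, -1, I, -I} : Set ℂ)) : star z * z = 1 := by
  rcases hz with rfl | rfl | rfl | rfl <;> simp

lemma isGaussInt_of_mem {z : ℂ} (hz : z ∈ ({0, 1, -1, I, -I} : Set ℂ)) : IsGaussInt z := by
  rcases hz with rfl | rfl | rfl | rfl | rfl
  exacts [⟨0, 0, by simp, by simp⟩, ⟨1, 0, by simp, by simp⟩, ⟨-1, 0, by simp, by simp⟩,
    ⟨0, 1, by simp, by simp⟩, ⟨0, -1, by simp, by simp⟩]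

lemma eq_one_or_neg_one_of_re_eq_one_add_mul {N : ℕ} (hN : 2 ≤ N) {z : ℂ}
    (hz : z ∈ ({0, 1, -1, I, -I} : Set ℂ)) (h : ∃ a : ℤ, z.re = 1 + N * a) :
    z = 1 ∨ (z = -1 ∧ N = 2) := by
  obtain ⟨a, ha⟩ := h
  have key : ∀ m : ℤ, (m : ℝ) = 1 + N * a → |m - 1| < N → m = 1 := fun m hm hlt => by
    have hdvd : (N : ℤ) ∣ m - 1 :=
      ⟨a, by exact_mod_cast (by push_cast; linarith : ((m - 1 : ℤ) : ℝ) = N * a)⟩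
    linarith [Int.eq_zero_of_abs_lt_dvd hdvd hlt]
  have hre0 : ¬ (0 : ℝ) = 1 + N * a := fun h0 => by
    have := key 0 (by simpa using h0) (by simp; omega)
    norm_num at this
  rcases hz with rfl | rfl | rfl | rfl | rfl
  · exact absurd (by simpa using ha) hre0
  · exact Or.inl rfl
  · refine Or.inr ⟨rfl, ?_⟩
    by_contra hN2
    have := key (-1) (by simpa using ha) (by norm_num; omega)
    norm_num at this
  · exact absurd (by simpa using ha) hre0
  · exact absurd (by simpa using ha) hre0

@[simp] lemma one_apply_re {ι : Type*} [DecidableEq ι] (i j : ι) :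
    ((1 : Matrix ι ι ℂ) i j).re = (1 : Matrix ι ι ℝ) i j := by
  by_cases h : i = j <;> simp [one_apply, h]

@[simp] lemma one_apply_im {ι : Type*} [DecidableEq ι] (i j : ι) :
    ((1 : Matrix ι ι ℂ) i j).im = 0 := by
  by_cases h : i = j <;> simp [one_apply, h]

lemma isGaussInt_one_apply {ι : Type*} [DecidableEq ι] (i j : ι) :
    IsGaussInt ((1 : Matrix ι ι ℂ) i j) := by
  by_cases h : i = j
  · exact ⟨1, 0, by simp [h, one_apply], by simp⟩
  · exact ⟨0, 0, by simp [h], by simp⟩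

lemma kmat_mem_GammaN_iff {n N : ℕ} {u : Mat n} :
    kmat u ∈ GammaN n N ↔ kmat u ∈ Sp n ∧ ∀ i j, GaussModEq N (u i j) ((1 : Mat n) i j) := by
  simp only [GaussModEq, one_apply_re, one_apply_im, zero_add]
  refine and_congr_right fun _ => ⟨fun h i j => ?_, fun h => ?_⟩
  · obtain ⟨a, ha⟩ := h (.inl i) (.inl j)
    obtain ⟨b, hb⟩ := h (.inl i) (.inr j)
    exact ⟨a, b, by simpa [kmat, one_apply] using ha, by simpa [kmat] using hb⟩
  · rintro (i | i) (j | j) <;> obtain ⟨a, b, ha, hb⟩ := h i j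
    · exact ⟨a, by simpa [kmat, one_apply] using ha⟩
    · exact ⟨b, by simpa [kmat] using hb⟩
    · exact ⟨-b, by simp [kmat, hb]⟩
    · exact ⟨a, by simpa [kmat, one_apply] using ha⟩

lemma GammaN_inter_Kset (n N : ℕ) :
    GammaN n N ∩ Kset n = kmat '' {u | u ∈ unitaryGroup (Fin n) ℂ ∧
      ∀ i j, GaussModEq N (u i j) ((1 : Mat n) i j)} := by
  ext g
  constructor
  · rintro ⟨hΓ, hK⟩
    obtain ⟨u, rfl⟩ := exists_kmat_of_mem_Kset hK
    exact ⟨u, ⟨kmat_mem_Kset_iff.mp hK, (kmat_mem_GammaN_iff.mp hΓ).2⟩, rfl⟩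
  · rintro ⟨u, ⟨hu, hN⟩, rfl⟩
    have hK := kmat_mem_Kset_iff.mpr hu
    exact ⟨kmat_mem_GammaN_iff.mpr ⟨hK.1, hN⟩, hK⟩

section monomial

variable {ι : Type*} [DecidableEq ι]

lemma of_ite_eq_permMatrix (σ : Equiv.Perm ι) :
    (of fun i j => if i = σ j then (1 : ℂ) else 0) = σ⁻¹.permMatrix ℂ := by
  ext i j
  simp [PEquiv.toMatrix_apply, Equiv.toPEquiv_apply, Equiv.eq_symm_apply, eq_comm]

variable [Fintype ι]

lemma sum_normSq_col_eq_one {u : Matrix ι ι ℂ} (hu : u ∈ unitaryGroup ι ℂ) (j : ι) :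
    ∑ i, normSq (u i j) = 1 := by
  have h := congrFun (congrFun (mem_unitaryGroup_iff'.mp hu) j) j
  simp only [Matrix.mul_apply, star_apply, one_apply_eq] at h
  have hC : ((∑ i, normSq (u i j) : ℝ) : ℂ) = 1 := by simpa [normSq_eq_conj_mul_self] using h
  exact_mod_cast hC

lemma exists_col_eq_single {u : Matrix ι ι ℂ} (hu : u ∈ unitaryGroup ι ℂ)
    (hZ : ∀ i j, IsGaussInt (u i j)) (j : ι) :
    ∃ i, u i j ∈ ({1, -1, I, -I} : Set ℂ) ∧ ∀ k ≠ i, u k j = 0 := by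
  have hsum := sum_normSq_col_eq_one hu j
  obtain ⟨i, hi⟩ : ∃ i, u i j ≠ 0 := by
    by_contra! h
    simp [h] at hsum
  have hrest : ∀ k ≠ i, u k j = 0 := by
    intro k hk
    by_contra hk0
    have hpair : normSq (u i j) + normSq (u k j) ≤ ∑ l, normSq (u l j) := by
      rw [← Finset.sum_pair (f := fun l => normSq (u l j)) hk.symm]
      exact Finset.sum_le_univ_sum_of_nonneg fun _ => normSq_nonneg _
    linarith [(hZ i j).one_le_normSq hi, (hZ k j).one_le_normSq hk0]
  refine ⟨i, (hZ i j).mem_of_normSq_eq_one ?_, hrest⟩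
  rwa [Finset.sum_eq_single i (fun k _ hk => by simp [hrest k hk]) (by simp)] at hsum

lemma exists_monomial_of_mem_unitaryGroup {u : Matrix ι ι ℂ} (hu : u ∈ unitaryGroup ι ℂ)
    (hZ : ∀ i j, IsGaussInt (u i j)) :
    ∃ (d : ι → ℂ) (σ : Equiv.Perm ι), (∀ i, d i ∈ ({1, -1, I, -I} : Set ℂ)) ∧
      ∀ i j, u i j = if i = σ j then d i else 0 := by
  choose σ hσ hzero using exists_col_eq_single hu hZ
  have hne : ∀ j, u (σ j) j ≠ 0 := fun j h => by
    simpa [h] using star_mul_self_of_mem (hσ j)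
  -- distinct columns are orthogonal, so their nonzero entries sit in distinct rows
  have hinj : Function.Injective σ := by
    intro a b hab
    by_contra hab'
    have h := congrFun (congrFun (mem_unitaryGroup_iff'.mp hu) a) b
    rw [Matrix.mul_apply, Finset.sum_eq_single (σ a), one_apply_ne hab'] at h
    · exact mul_ne_zero (star_ne_zero.mpr (hne a)) (hab ▸ hne b) h
    · intro k _ hk
      simp [hzero a k hk]
    · simp
  let τ := Equiv.ofBijective σ (Finite.injective_iff_bijective.mp hinj)
  refine ⟨fun i => u i (τ.symm i), τ, fun i => ?_, fun i j => ?_⟩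
  · have := hσ (τ.symm i)
    rwa [show σ (τ.symm i) = i from τ.apply_symm_apply i] at this
  · split_ifs with h
    · subst h
      simp only [Equiv.symm_apply_apply]
    · exact hzero j i h

lemma diagonal_mul_of_ite (d : ι → ℂ) (σ : Equiv.Perm ι) :
    diagonal d * (of fun i j => if i = σ j then (1 : ℂ) else 0)
      = of fun i j => if i = σ j then d i else 0 := by
  ext i j
  simp [diagonal_mul]

lemma diagonal_mem_unitaryGroup {d : ι → ℂ} (hd : ∀ i, star (d i) * d i = 1) :
    diagonal d ∈ unitaryGroup ι ℂ := by
  rw [mem_unitaryGroup_iff', star_eq_conjTranspose, diagonal_conjTranspose, diagonal_mul_diagonal,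
    ← diagonal_one]
  exact congrArg diagonal (funext hd)

lemma permMatrix_mem_unitaryGroup (σ : Equiv.Perm ι) : σ.permMatrix ℂ ∈ unitaryGroup ι ℂ := by
  rw [mem_unitaryGroup_iff', star_eq_conjTranspose, conjTranspose_permMatrix, ← permMatrix_mul,
    mul_inv_cancel, permMatrix_one]

lemma monomial_mem_unitaryGroup {d : ι → ℂ} (hd : ∀ i, d i ∈ ({1, -1, I, -I} : Set ℂ))
    (σ : Equiv.Perm ι) :
    diagonal d * (of fun i j => if i = σ j then (1 : ℂ) else 0) ∈ unitaryGroup ι ℂ := by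
  rw [of_ite_eq_permMatrix]
  exact Submonoid.mul_mem _ (diagonal_mem_unitaryGroup fun i => star_mul_self_of_mem (hd i))
    (permMatrix_mem_unitaryGroup _)

lemma unitary_gaussModEq_one_iff {u : Matrix ι ι ℂ} :
    (u ∈ unitaryGroup ι ℂ ∧ ∀ i j, GaussModEq 1 (u i j) ((1 : Matrix ι ι ℂ) i j)) ↔
      ∃ (d : ι → ℂ) (σ : Equiv.Perm ι), (∀ i, d i ∈ ({1, -1, I, -I} : Set ℂ)) ∧
        u = diagonal d * (of fun i j => if i = σ j then (1 : ℂ) else 0) := by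
  constructor
  · rintro ⟨hu, hc⟩
    obtain ⟨d, σ, hd, hud⟩ := exists_monomial_of_mem_unitaryGroup hu
      fun i j => (hc i j).isGaussInt (isGaussInt_one_apply i j)
    refine ⟨d, σ, hd, ?_⟩
    rw [diagonal_mul_of_ite]
    ext i j
    exact hud i j
  · rintro ⟨d, σ, hd, rfl⟩
    refine ⟨monomial_mem_unitaryGroup hd σ,
      fun i j => gaussModEq_one ?_ (isGaussInt_one_apply i j)⟩
    rw [diagonal_mul_of_ite, of_apply]
    split_ifs
    · exact isGaussInt_of_mem (Or.inr (hd i))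
    · exact isGaussInt_of_mem (Or.inl rfl)

lemma exists_diagonal_of_gaussModEq {N : ℕ} (hN : 2 ≤ N) {u : Matrix ι ι ℂ}
    (hu : u ∈ unitaryGroup ι ℂ) (hc : ∀ i j, GaussModEq N (u i j) ((1 : Matrix ι ι ℂ) i j)) :
    ∃ d : ι → ℂ, (∀ i, d i = 1 ∨ (d i = -1 ∧ N = 2)) ∧ u = diagonal d := by
  obtain ⟨d, σ, hd, hud⟩ := exists_monomial_of_mem_unitaryGroup hu
    fun i j => (hc i j).isGaussInt (isGaussInt_one_apply i j)
  have hdiag : ∀ i, u i i = 1 ∨ (u i i = -1 ∧ N = 2) := fun i => by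
    obtain ⟨a, -, ha, -⟩ := hc i i
    refine eq_one_or_neg_one_of_re_eq_one_add_mul hN ?_ ⟨a, by simpa using ha⟩
    rw [hud]
    split_ifs
    · exact Or.inr (hd i)
    · exact Or.inl rfl
  have hσ : ∀ i, σ i = i := fun i => by
    by_contra h
    have h0 : u i i = 0 := by rw [hud, if_neg (Ne.symm h)]
    rcases hdiag i with h1 | ⟨h1, -⟩ <;> rw [h0] at h1 <;> norm_num at h1
  refine ⟨fun i => u i i, hdiag, ?_⟩
  ext i j
  by_cases h : i = j
  · subst h
    simp
  · rw [diagonal_apply_ne _ h, hud, hσ, if_neg h]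

lemma unitary_gaussModEq_two_iff {u : Matrix ι ι ℂ} :
    (u ∈ unitaryGroup ι ℂ ∧ ∀ i j, GaussModEq 2 (u i j) ((1 : Matrix ι ι ℂ) i j)) ↔
      ∃ d : ι → ℂ, (∀ i, d i = 1 ∨ d i = -1) ∧ u = diagonal d := by
  constructor
  · rintro ⟨hu, hc⟩
    obtain ⟨d, hd, rfl⟩ := exists_diagonal_of_gaussModEq le_rfl hu hc
    exact ⟨d, fun i => (hd i).imp_right And.left, rfl⟩
  · rintro ⟨d, hd, rfl⟩
    refine ⟨diagonal_mem_unitaryGroup fun i => star_mul_self_of_mem ?_, fun i j => ?_⟩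
    · exact (hd i).elim Or.inl (Or.inr ∘ Or.inl)
    by_cases h : i = j
    · subst h
      rw [diagonal_apply_eq, one_apply_eq]
      rcases hd i with h | h
      · rw [h]
        exact GaussModEq.refl 2 1
      · exact ⟨-1, 0, by simp [h]; norm_num, by simp [h]⟩
    · rw [diagonal_apply_ne _ h, one_apply_ne h]
      exact GaussModEq.refl 2 0

lemma unitary_gaussModEq_iff_eq_one {N : ℕ} (hN : 3 ≤ N) {u : Matrix ι ι ℂ} :
    (u ∈ unitaryGroup ι ℂ ∧ ∀ i j, GaussModEq N (u i j) ((1 : Matrix ι ι ℂ) i j)) ↔ u = 1 := by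
  constructor
  · rintro ⟨hu, hc⟩
    obtain ⟨d, hd, rfl⟩ := exists_diagonal_of_gaussModEq (by omega) hu hc
    rw [← diagonal_one]
    exact congrArg diagonal (funext fun i => (hd i).resolve_right fun h => by omega)
  · rintro rfl
    exact ⟨one_mem _, fun i j => GaussModEq.refl N _⟩

end monomial

theorem stmt8 (n : ℕ) :
    (GammaN n 1 ∩ Kset n
        = kmat '' {u : Mat n | ∃ (d : Fin n → ℂ) (σ : Equiv.Perm (Fin n)),
            (∀ i, d i = 1 ∨ d i = -1 ∨ d i = Complex.I ∨ d i = -Complex.I) ∧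
            u = Matrix.diagonal d * (Matrix.of fun i j => if i = σ j then (1 : ℂ) else 0)})
    ∧ (GammaN n 2 ∩ Kset n
        = kmat '' {u : Mat n | ∃ d : Fin n → ℂ,
            (∀ i, d i = 1 ∨ d i = -1) ∧ u = Matrix.diagonal d})
    ∧ ∀ N : ℕ, 3 ≤ N → GammaN n N ∩ Kset n = {1} := by
  refine ⟨?_, ?_, fun N hN => ?_⟩
  · rw [GammaN_inter_Kset]
    exact congrArg _ (Set.ext fun u => unitary_gaussModEq_one_iff)
  · rw [GammaN_inter_Kset]
    exact congrArg _ (Set.ext fun u => unitary_gaussModEq_two_iff)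
  · rw [GammaN_inter_Kset, Set.ext fun u => unitary_gaussModEq_iff_eq_one hN,
      Set.ofPred_eq_eq_singleton, Set.image_singleton, kmat_one]
end
end
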